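/- Let (M,ρ) be a finite pseudometric space and let G = (V,E) be a finite tree joining M in which every vertex of degree 1 belongs to M. Then there exists a generalized minimal parametric filling of type G: a weight function w* : E → ℝ such that (G,w*) is a generalized filling of (M,ρ) and w*(G) ≤ w(G) for every weight function w : E → ℝ making (G,w) a generalized filling of (M,ρ). -/

import Mathlib

/-!
Since paths in a tree are unique, the generalized fillings of type `G` form a polyhedral set in
`Sym2 V → ℝ`, cut out by one linear inequality per pair of boundary points, and large constant
weights lie in it. The total weight is a linear functional, and by Fourier–Motzkin
elimination the image of a polyhedral set under a linear functional is polyhedral, hence closed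
in `ℝ`; so a linear functional that is bounded below on a nonempty polyhedral set attains its
infimum there.

The total weight of a filling is nonnegative. Root the tree at a leaf `r`, which is a boundary
point. Induction from the leaves shows that every vertex `v` has a boundary descendant `ℓ` such
that the path from `v` to `ℓ` weighs at most the subtree below `v`; at the root this gives
`w(G) ≥ w(path r ℓ) ≥ ρ r ℓ ≥ 0`.
-/

open scoped BigOperators

namespace MinFill

variable {V : Type*}

/-- The total weight of a (generalized) weighted graph: the sum of the weights
of its edges. -/
noncomputable def graphWeight (G : SimpleGraph V) (w : Sym2 V → ℝ) : ℝ :=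
  ∑ᶠ e ∈ G.edgeSet, w e

/-- The weight of a walk: the sum of the weights of its edges. -/
def walkWeight {G : SimpleGraph V} (w : Sym2 V → ℝ) {u v : V} (p : G.Walk u v) : ℝ :=
  (p.edges.map w).sum

/-- `dw G w u v` is the minimum over simple paths in `G` from `u` to `v` of the
sum of the weights of their edges. -/
noncomputable def dw (G : SimpleGraph V) (w : Sym2 V → ℝ) (u v : V) : ℝ :=
  sInf {r : ℝ | ∃ p : G.Walk u v, p.IsPath ∧ walkWeight w p = r}

/-- The degree of a vertex: the number of edges incident to it. -/
noncomputable def deg (G : SimpleGraph V) (v : V) : ℕ :=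
  (G.neighborSet v).ncard

/-- `ρ` is a pseudometric on the subset `M`: symmetric, nonnegative, vanishing
on the diagonal and satisfying the triangle inequality. -/
def IsPseudometricOn (M : Set V) (ρ : V → V → ℝ) : Prop :=
  (∀ p ∈ M, ∀ q ∈ M, ρ p q = ρ q p) ∧
  (∀ p ∈ M, ∀ q ∈ M, 0 ≤ ρ p q) ∧
  (∀ p ∈ M, ρ p p = 0) ∧
  (∀ p ∈ M, ∀ q ∈ M, ∀ r ∈ M, ρ p r ≤ ρ p q + ρ q r)

/-- `(G, w)` is a generalized filling of `(M, ρ)` (with `M ⊆ V`): `G` is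
connected (and joins `M`), and for all boundary points `p, q ∈ M` every simple
path in `G` from `p` to `q` has weight at least `ρ p q` (equivalently
`ρ p q ≤ d_w(p, q)`). -/
def IsGenFilling (G : SimpleGraph V) (w : Sym2 V → ℝ) (M : Set V) (ρ : V → V → ℝ) : Prop :=
  G.Connected ∧ ∀ p ∈ M, ∀ q ∈ M, ∀ γ : G.Walk p q, γ.IsPath → ρ p q ≤ walkWeight w γ

end MinFill

section Polyhedral

variable {E F : Type*} [AddCommGroup E] [Module ℝ E] [AddCommGroup F] [Module ℝ F]

def IsPolyhedral (S : Set E) : Prop :=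
  ∃ (n : ℕ) (f : Fin n → E →ₗ[ℝ] ℝ) (b : Fin n → ℝ), S = {x | ∀ i, b i ≤ f i x}

lemma isPolyhedral_of_finite {ι : Type*} [Finite ι] (f : ι → E →ₗ[ℝ] ℝ) (b : ι → ℝ) :
    IsPolyhedral {x | ∀ i, b i ≤ f i x} := by
  obtain ⟨n, ⟨e⟩⟩ := Finite.exists_equiv_fin ι
  refine ⟨n, f ∘ e.symm, b ∘ e.symm, ?_⟩
  ext x
  exact e.symm.forall_congr_right.symm

lemma IsPolyhedral.preimage {S : Set E} (hS : IsPolyhedral S) (g : F →ₗ[ℝ] E) :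
    IsPolyhedral (g ⁻¹' S) := by
  obtain ⟨n, f, b, rfl⟩ := hS
  exact ⟨n, fun i => (f i).comp g, b, rfl⟩

lemma IsPolyhedral.image_equiv {S : Set E} (hS : IsPolyhedral S) (e : E ≃ₗ[ℝ] F) :
    IsPolyhedral (e '' S) := by
  rw [e.image_eq_preimage_symm]
  exact hS.preimage e.symm.toLinearMap

lemma IsPolyhedral.inter {S T : Set E} (hS : IsPolyhedral S) (hT : IsPolyhedral T) :
    IsPolyhedral (S ∩ T) := by
  obtain ⟨n, f, b, rfl⟩ := hS
  obtain ⟨m, g, c, rfl⟩ := hT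
  convert isPolyhedral_of_finite (Sum.elim f g) (Sum.elim b c) using 1
  ext x
  simp [Sum.forall]

lemma isPolyhedral_setOf_eq (f g : E →ₗ[ℝ] ℝ) : IsPolyhedral {x | f x = g x} := by
  convert isPolyhedral_of_finite ![f - g, g - f] 0 using 1
  ext x
  simp [Fin.forall_fin_two, le_antisymm_iff, and_comm]

lemma exists_forall_le_and_forall_le {ι κ : Type*} [Finite ι] [Finite κ] {l : ι → ℝ}
    {u : κ → ℝ} (h : ∀ i j, l i ≤ u j) : ∃ t, (∀ i, l i ≤ t) ∧ ∀ j, t ≤ u j := by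
  cases isEmpty_or_nonempty κ
  · obtain ⟨t, ht⟩ := (Set.finite_range l).bddAbove
    exact ⟨t, fun i => ht ⟨i, rfl⟩, isEmptyElim⟩
  · exact ⟨⨅ j, u j, fun i => le_ciInf (h i), ciInf_le (Set.finite_range u).bddBelow⟩

/-- Fourier–Motzkin elimination: a constraint not involving the last coordinate survives, and
every pair of constraints bounding it from below and from above is replaced by the positive
combination in which it cancels. -/
theorem IsPolyhedral.image_fst {S : Set (E × ℝ)} (hS : IsPolyhedral S) :
    IsPolyhedral (Prod.fst '' S) := by
  obtain ⟨n, f, b, rfl⟩ := hS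
  set g : Fin n → E →ₗ[ℝ] ℝ := fun i => (f i).comp (LinearMap.inl ℝ E ℝ)
  set a : Fin n → ℝ := fun i => f i (0, 1)
  have hf : ∀ i x t, f i (x, t) = g i x + t * a i := fun i x t => by
    rw [show (x, t) = (x, 0) + t • ((0 : E), (1 : ℝ)) by simp, map_add, map_smul, smul_eq_mul]
    rfl
  let F : {i // a i = 0} ⊕ {i // 0 < a i} × {j // a j < 0} → E →ₗ[ℝ] ℝ :=
    Sum.elim (fun i => g i) fun p => (-a p.2) • g p.1 + a p.1 • g p.2
  let B : {i // a i = 0} ⊕ {i // 0 < a i} × {j // a j < 0} → ℝ :=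
    Sum.elim (fun i => b i) fun p => -a p.2 * b p.1 + a p.1 * b p.2
  convert isPolyhedral_of_finite F B using 1
  ext x
  simp only [Set.mem_image, Set.mem_ofPred_eq, Prod.exists, exists_and_right, exists_eq_right,
    Sum.forall, Prod.forall, Subtype.forall, hf]
  constructor
  · rintro ⟨t, ht⟩
    refine ⟨fun i hi => by simpa [F, B, hi] using ht i, fun i hi j hj => ?_⟩
    simp only [F, B, Sum.elim_inr, LinearMap.add_apply, LinearMap.smul_apply, smul_eq_mul]
    nlinarith [mul_le_mul_of_nonneg_left (ht i) (neg_nonneg.2 hj.le),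
      mul_le_mul_of_nonneg_left (ht j) hi.le]
  · rintro ⟨hzero, hpair⟩
    obtain ⟨t, hlow, hup⟩ := exists_forall_le_and_forall_le
      (l := fun i : {i // 0 < a i} => (b i - g i x) / a i)
      (u := fun j : {j // a j < 0} => (b j - g j x) / a j) fun ⟨i, hi⟩ ⟨j, hj⟩ => by
        have := hpair i hi j hj
        simp only [F, B, Sum.elim_inr, LinearMap.add_apply, LinearMap.smul_apply,
          smul_eq_mul] at this
        rw [div_le_iff₀ hi, div_mul_eq_mul_div, le_div_iff_of_neg hj]
        linarith
    refine ⟨t, fun i => ?_⟩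
    rcases lt_trichotomy (a i) 0 with hi | hi | hi
    · have := hup ⟨i, hi⟩
      rw [le_div_iff_of_neg hi] at this
      linarith
    · simpa [F, B, hi] using hzero i hi
    · have := hlow ⟨i, hi⟩
      rw [div_le_iff₀ hi] at this
      linarith

theorem IsPolyhedral.image_fst_fin (n : ℕ) {S : Set (E × (Fin n → ℝ))} (hS : IsPolyhedral S) :
    IsPolyhedral (Prod.fst '' S) := by
  induction n generalizing E with
  | zero => exact hS.image_equiv (LinearEquiv.prodUnique (R := ℝ))
  | succ n ih =>
    let e : (E × (Fin (n + 1) → ℝ)) ≃ₗ[ℝ] (E × ℝ) × (Fin n → ℝ) :=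
      ((LinearEquiv.refl ℝ E).prodCongr (Fin.consLinearEquiv ℝ fun _ => ℝ).symm).trans
        (LinearEquiv.prodAssoc ℝ E ℝ (Fin n → ℝ)).symm
    have h : Prod.fst '' S = Prod.fst '' (Prod.fst '' (e '' S)) := by
      simp only [Set.image_image]
      rfl
    rw [h]
    exact (ih (hS.image_equiv e)).image_fst

theorem IsPolyhedral.image_fst_pi {α : Type*} [Finite α] {S : Set (E × (α → ℝ))}
    (hS : IsPolyhedral S) : IsPolyhedral (Prod.fst '' S) := by
  obtain ⟨n, ⟨e⟩⟩ := Finite.exists_equiv_fin α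
  let e' : (E × (α → ℝ)) ≃ₗ[ℝ] E × (Fin n → ℝ) :=
    (LinearEquiv.refl ℝ E).prodCongr (LinearEquiv.funCongrLeft ℝ ℝ e.symm)
  have h : Prod.fst '' S = Prod.fst '' (e' '' S) := by
    simp only [Set.image_image]
    rfl
  rw [h]
  exact IsPolyhedral.image_fst_fin n (hS.image_equiv e')

theorem IsPolyhedral.image_linearMap {α : Type*} [Finite α] {S : Set (α → ℝ)}
    (hS : IsPolyhedral S) (φ : (α → ℝ) →ₗ[ℝ] ℝ) : IsPolyhedral (φ '' S) := by
  let T : Set (ℝ × (α → ℝ)) := LinearMap.snd ℝ ℝ (α → ℝ) ⁻¹' S ∩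
    {z | LinearMap.fst ℝ ℝ (α → ℝ) z = (φ ∘ₗ LinearMap.snd ℝ ℝ (α → ℝ)) z}
  have h : φ '' S = Prod.fst '' T := by
    ext t
    simp [T, eq_comm]
  rw [h]
  exact ((hS.preimage _).inter (isPolyhedral_setOf_eq _ _)).image_fst_pi

end Polyhedral

theorem IsPolyhedral.isClosed {E : Type*} [NormedAddCommGroup E] [NormedSpace ℝ E]
    [FiniteDimensional ℝ E] {S : Set E} (hS : IsPolyhedral S) : IsClosed S := by
  obtain ⟨n, f, b, rfl⟩ := hS
  simp only [Set.ofPred_forall]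
  exact isClosed_iInter fun i => isClosed_le continuous_const (f i).continuous_of_finiteDimensional

theorem IsPolyhedral.exists_isMinOn {α : Type*} [Finite α] {S : Set (α → ℝ)}
    (hS : IsPolyhedral S) (hne : S.Nonempty) (φ : (α → ℝ) →ₗ[ℝ] ℝ) (hbdd : BddBelow (φ '' S)) :
    ∃ x ∈ S, IsMinOn φ S x := by
  obtain ⟨x, hx, hmin⟩ := (hS.image_linearMap φ).isClosed.csInf_mem (hne.image φ) hbdd
  exact ⟨x, hx, fun y hy => hmin ▸ csInf_le hbdd ⟨y, hy, rfl⟩⟩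

theorem Finset.exists_le_sum_of_pairwise_add_nonneg {ι : Type*} {s : Finset ι} (hs : s.Nonempty)
    (f : ι → ℝ) (hf : ∀ i ∈ s, ∀ j ∈ s, i ≠ j → 0 ≤ f i + f j) : ∃ i ∈ s, f i ≤ ∑ j ∈ s, f j := by
  classical
  obtain ⟨i, hi, hmin⟩ := s.exists_min_image f hs
  refine ⟨i, hi, ?_⟩
  rw [← Finset.sum_erase_add _ _ hi, le_add_iff_nonneg_left]
  refine Finset.sum_nonneg fun j hj => ?_
  obtain ⟨hji, hj⟩ := Finset.mem_erase.1 hj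
  linarith [hmin j hj, hf i hi j hj hji.symm]

namespace SimpleGraph.IsTree

open Walk

variable {V : Type*} {G : SimpleGraph V} (hG : G.IsTree)

noncomputable def path (u v : V) : G.Walk u v := (hG.existsUnique_path u v).choose

lemma isPath_path (u v : V) : (hG.path u v).IsPath := (hG.existsUnique_path u v).choose_spec.1

lemma eq_path {u v : V} {p : G.Walk u v} (hp : p.IsPath) : p = hG.path u v :=
  (hG.existsUnique_path u v).choose_spec.2 p hp

lemma path_self (u : V) : hG.path u u = nil := (hG.eq_path .nil).symm

lemma reverse_path (u v : V) : (hG.path u v).reverse = hG.path v u :=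
  hG.eq_path (hG.isPath_path u v).reverse

lemma path_of_adj {u v : V} (h : G.Adj u v) : hG.path u v = cons h nil :=
  (hG.eq_path (by simp [h.ne])).symm

lemma path_concat {u v w : V} (h : G.Adj v w) (hw : w ∉ (hG.path u v).support) :
    hG.path u w = (hG.path u v).concat h :=
  (hG.eq_path ((hG.isPath_path u v).concat hw h)).symm

lemma path_eq_cons {u v : V} (hne : u ≠ v) :
    hG.path u v = cons (adj_snd (not_nil_of_ne hne)) (hG.path (hG.path u v).snd v) := by
  have hnil : ¬ (hG.path u v).Nil := not_nil_of_ne hne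
  have htail : (hG.path u v).tail.IsPath := by
    have h := hG.isPath_path u v
    rw [← cons_tail_eq _ hnil] at h
    exact h.of_cons
  conv_lhs => rw [← cons_tail_eq _ hnil, hG.eq_path htail]

lemma path_eq_append {u v x : V} (hx : x ∈ (hG.path u v).support) :
    hG.path u v = (hG.path u x).append (hG.path x v) := by
  classical
  rw [← take_spec (hG.path u v) hx, ← hG.eq_path ((hG.isPath_path u v).takeUntil hx),
    ← hG.eq_path ((hG.isPath_path u v).dropUntil hx)]

lemma support_path_prefix {u v x : V} (hx : x ∈ (hG.path u v).support) :
    (hG.path u x).support <+: (hG.path u v).support := by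
  rw [hG.path_eq_append hx, support_append]
  exact List.prefix_append _ _

lemma mem_support_path_or {r u x y : V} (hx : x ∈ (hG.path r u).support)
    (hy : y ∈ (hG.path r u).support) :
    x ∈ (hG.path r y).support ∨ y ∈ (hG.path r x).support := by
  rcases List.prefix_or_prefix_of_prefix (hG.support_path_prefix hx)
    (hG.support_path_prefix hy) with h | h
  · exact .inl (h.subset (end_mem_support _))
  · exact .inr (h.subset (end_mem_support _))

lemma eq_of_mem_support_path_of_mem_support_path {u v x y : V}
    (hy : y ∈ (hG.path u v).support) (hxu : x ∈ (hG.path u y).support)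
    (hxv : x ∈ (hG.path y v).support) : x = y := by
  have hnodup := (hG.isPath_path u v).support_nodup
  rw [hG.path_eq_append hy, support_append] at hnodup
  rw [← cons_tail_support, List.mem_cons] at hxv
  exact hxv.resolve_right fun hx => List.disjoint_of_nodup_append hnodup hxu hx

variable [Fintype V] (r : V)

open Classical in
noncomputable def descendants (v : V) : Finset V := {u | v ∈ (hG.path r u).support}

open Classical in
noncomputable def children (v : V) : Finset V := {c | G.Adj v c ∧ v ∈ (hG.path r c).support}

noncomputable def subtreeWeight {M : Type*} [AddCommMonoid M] (w : Sym2 V → M) (v : V) : M :=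
  ∑ u ∈ hG.descendants r v, ∑ c ∈ hG.children r u, w s(u, c)

variable {hG r}

@[simp] lemma mem_descendants {v u : V} :
    u ∈ hG.descendants r v ↔ v ∈ (hG.path r u).support := by
  simp [descendants]

@[simp] lemma mem_children {v c : V} :
    c ∈ hG.children r v ↔ G.Adj v c ∧ v ∈ (hG.path r c).support := by
  simp [children]

lemma self_mem_descendants (v : V) : v ∈ hG.descendants r v :=
  mem_descendants.2 (end_mem_support _)

lemma descendants_root : hG.descendants r r = Finset.univ :=
  Finset.eq_univ_of_forall fun _ => mem_descendants.2 (start_mem_support _)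

lemma adj_of_mem_children {v c : V} (hc : c ∈ hG.children r v) : G.Adj v c :=
  (mem_children.1 hc).1

lemma path_child {v c : V} (hc : c ∈ hG.children r v) :
    hG.path r c = (hG.path r v).concat (adj_of_mem_children hc) := by
  rw [hG.path_eq_append (mem_children.1 hc).2, hG.path_of_adj (adj_of_mem_children hc),
    concat_eq_append]

lemma child_notMem_support_path {v c : V} (hc : c ∈ hG.children r v) :
    c ∉ (hG.path r v).support := by
  have h := (hG.isPath_path r c).support_nodup
  rw [hG.path_child hc, support_concat, List.nodup_append] at h
  exact fun hmem => h.2.2 c hmem c (List.mem_singleton_self c) rfl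

lemma notMem_descendants_child {v c : V} (hc : c ∈ hG.children r v) :
    v ∉ hG.descendants r c :=
  fun h => child_notMem_support_path hc (mem_descendants.1 h)

lemma descendants_subset_of_mem {v c : V} (hc : c ∈ hG.descendants r v) :
    hG.descendants r c ⊆ hG.descendants r v := fun _ hu =>
  mem_descendants.2 ((hG.support_path_prefix (mem_descendants.1 hu)).subset (mem_descendants.1 hc))

lemma child_mem_descendants {v c : V} (hc : c ∈ hG.children r v) : c ∈ hG.descendants r v :=
  mem_descendants.2 (mem_children.1 hc).2

lemma card_descendants_child_lt {v c : V} (hc : c ∈ hG.children r v) :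
    (hG.descendants r c).card < (hG.descendants r v).card :=
  Finset.card_lt_card ((Finset.ssubset_iff_of_subset
    (descendants_subset_of_mem (child_mem_descendants hc))).2
    ⟨v, self_mem_descendants v, notMem_descendants_child hc⟩)

lemma disjoint_descendants_children {v c c' : V} (hc : c ∈ hG.children r v)
    (hc' : c' ∈ hG.children r v) (hne : c ≠ c') :
    Disjoint (hG.descendants r c) (hG.descendants r c') := by
  refine Finset.disjoint_left.2 fun u hu hu' => ?_
  rcases hG.mem_support_path_or (mem_descendants.1 hu) (mem_descendants.1 hu') with h | h
  · rw [hG.path_child hc', support_concat, List.mem_append, List.mem_singleton] at h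
    exact h.elim (child_notMem_support_path hc) hne
  · rw [hG.path_child hc, support_concat, List.mem_append, List.mem_singleton] at h
    exact h.elim (child_notMem_support_path hc') hne.symm

lemma mem_descendants_of_mem_support {c ℓ x : V} (hℓ : ℓ ∈ hG.descendants r c)
    (hx : x ∈ (hG.path c ℓ).support) : x ∈ hG.descendants r c := by
  have hc := mem_descendants.1 hℓ
  have hxℓ : x ∈ (hG.path r ℓ).support := by
    rw [hG.path_eq_append hc, mem_support_append_iff]
    exact .inr hx
  rcases hG.mem_support_path_or hxℓ hc with h | h
  · rw [hG.eq_of_mem_support_path_of_mem_support_path hc h hx]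
    exact self_mem_descendants c
  · exact mem_descendants.2 h

lemma path_eq_cons_of_mem_descendants_child {v c ℓ : V} (hc : c ∈ hG.children r v)
    (hℓ : ℓ ∈ hG.descendants r c) :
    hG.path v ℓ = cons (adj_of_mem_children hc) (hG.path c ℓ) := by
  have h := hG.isPath_path r ℓ
  rw [hG.path_eq_append (mem_descendants.1 hℓ), hG.path_child hc, concat_eq_append,
    ← append_assoc, cons_append, nil_append] at h
  exact (hG.eq_path h.of_append_right).symm

lemma exists_child_of_mem_descendants {v u : V} (hu : u ∈ hG.descendants r v) (hne : u ≠ v) :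
    ∃ c ∈ hG.children r v, u ∈ hG.descendants r c := by
  have h := hG.isPath_path r u
  rw [hG.path_eq_append (mem_descendants.1 hu), hG.path_eq_cons hne.symm, ← cons_nil_append,
    append_assoc, ← concat_eq_append] at h
  have hc := hG.eq_path h.of_append_left
  refine ⟨(hG.path v u).snd, mem_children.2 ⟨adj_snd (not_nil_of_ne hne.symm), ?_⟩,
    mem_descendants.2 ?_⟩
  · rw [← hc, support_concat]
    exact List.mem_append_left _ (end_mem_support _)
  · rw [hG.path_eq_append (mem_descendants.1 hu), mem_support_append_iff]
    exact .inr (getVert_mem_support _ 1)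

lemma sum_descendants {M : Type*} [AddCommMonoid M] (g : V → M) (v : V) :
    ∑ u ∈ hG.descendants r v, g u =
      g v + ∑ c ∈ hG.children r v, ∑ u ∈ hG.descendants r c, g u := by
  classical
  have hsplit : hG.descendants r v =
      insert v ((hG.children r v).biUnion (hG.descendants r)) := by
    ext u
    simp only [Finset.mem_insert, Finset.mem_biUnion]
    refine ⟨fun hu => or_iff_not_imp_left.2 (exists_child_of_mem_descendants hu), ?_⟩
    rintro (rfl | ⟨c, hc, hu⟩)
    · exact self_mem_descendants u
    · exact descendants_subset_of_mem (child_mem_descendants hc) hu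
  have hv : v ∉ (hG.children r v).biUnion (hG.descendants r) := by
    simp only [Finset.mem_biUnion, not_exists, not_and]
    exact fun c hc => notMem_descendants_child hc
  rw [hsplit, Finset.sum_insert hv, Finset.sum_biUnion]
  exact fun c hc c' hc' hne => disjoint_descendants_children hc hc' hne

/-- Paths from `v` into the subtrees of two different children meet only at `v`. -/
lemma path_eq_reverse_append {v c c' ℓ ℓ' : V} (hc : c ∈ hG.children r v)
    (hc' : c' ∈ hG.children r v) (hne : c ≠ c') (hℓ : ℓ ∈ hG.descendants r c)
    (hℓ' : ℓ' ∈ hG.descendants r c') :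
    hG.path ℓ ℓ' = (hG.path v ℓ).reverse.append (hG.path v ℓ') := by
  refine (hG.eq_path ?_).symm
  have hp := (hG.isPath_path v ℓ).support_nodup
  rw [isPath_def, support_append, support_reverse, List.nodup_append, List.nodup_reverse,
    hG.path_eq_cons_of_mem_descendants_child hc' hℓ', support_cons, List.tail_cons]
  refine ⟨hp, (hG.isPath_path c' ℓ').support_nodup, fun x hx y hy hxy => ?_⟩
  subst hxy
  have hx' := mem_descendants_of_mem_support hℓ' hy
  rw [List.mem_reverse, hG.path_eq_cons_of_mem_descendants_child hc hℓ, support_cons,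
    List.mem_cons] at hx
  rcases hx with rfl | hx
  · exact notMem_descendants_child hc' hx'
  · exact Finset.disjoint_left.1 (disjoint_descendants_children hc hc' hne)
      (mem_descendants_of_mem_support hℓ hx) hx'

lemma sum_edgeFinset_eq_sum_children [Fintype G.edgeSet] {M : Type*} [AddCommMonoid M]
    (w : Sym2 V → M) :
    ∑ e ∈ G.edgeFinset, w e = ∑ v, ∑ c ∈ hG.children r v, w s(v, c) := by
  rw [Finset.sum_sigma']
  symm
  refine Finset.sum_bij (fun x _ => s(x.1, x.2)) (fun x hx => ?_) (fun x hx y hy hxy => ?_)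
    (fun e he => ?_) (fun _ _ => rfl)
  · exact mem_edgeFinset.2 (adj_of_mem_children (Finset.mem_sigma.1 hx).2)
  · obtain ⟨v, c⟩ := x
    obtain ⟨v', c'⟩ := y
    have hc := (Finset.mem_sigma.1 hx).2
    have hc' := (Finset.mem_sigma.1 hy).2
    rcases Sym2.eq_iff.1 hxy with ⟨rfl, rfl⟩ | ⟨rfl, rfl⟩
    · rfl
    · exact absurd (mem_children.1 hc').2 (child_notMem_support_path hc)
  · induction e using Sym2.ind with
    | _ a b =>
    have hab : G.Adj a b := mem_edgeFinset.1 he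
    by_cases h : a ∈ (hG.path r b).support
    · exact ⟨⟨a, b⟩, Finset.mem_sigma.2 ⟨Finset.mem_univ _, mem_children.2 ⟨hab, h⟩⟩, rfl⟩
    · refine ⟨⟨b, a⟩, Finset.mem_sigma.2 ⟨Finset.mem_univ _, mem_children.2 ⟨hab.symm, ?_⟩⟩,
        Sym2.eq_swap⟩
      rw [hG.path_concat hab.symm h, support_concat]
      exact List.mem_append_left _ (end_mem_support _)

lemma neighborSet_eq_singleton_of_children_eq_empty {v : V} (hv : v ≠ r)
    (h : hG.children r v = ∅) : G.neighborSet v = {(hG.path v r).snd} := by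
  ext x
  rw [mem_neighborSet, Set.mem_singleton_iff]
  refine ⟨fun hx => ?_, fun hx => hx ▸ adj_snd (not_nil_of_ne hv)⟩
  have hv' : v ∉ (hG.path r x).support := fun hmem =>
    Finset.notMem_empty x (h ▸ mem_children.2 ⟨hx, hmem⟩)
  rw [← hG.reverse_path r v, hG.path_concat hx.symm hv', reverse_concat, snd_cons]

lemma subtreeWeight_eq {M : Type*} [AddCommMonoid M] (w : Sym2 V → M) (v : V) :
    hG.subtreeWeight r w v = ∑ c ∈ hG.children r v, (w s(v, c) + hG.subtreeWeight r w c) := by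
  rw [subtreeWeight, sum_descendants, Finset.sum_add_distrib]
  rfl

variable (hG r) in
lemma subtreeWeight_root [Fintype G.edgeSet] {M : Type*} [AddCommMonoid M] (w : Sym2 V → M) :
    hG.subtreeWeight r w r = ∑ e ∈ G.edgeFinset, w e := by
  rw [subtreeWeight, descendants_root, sum_edgeFinset_eq_sum_children]

end SimpleGraph.IsTree

namespace MinFill

open SimpleGraph Walk

variable {V : Type*} {G : SimpleGraph V}

@[simp] lemma walkWeight_nil (w : Sym2 V → ℝ) {u : V} : walkWeight w (nil : G.Walk u u) = 0 :=
  rfl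

@[simp] lemma walkWeight_cons (w : Sym2 V → ℝ) {u v x : V} (h : G.Adj u v) (p : G.Walk v x) :
    walkWeight w (cons h p) = w s(u, v) + walkWeight w p := by
  simp [walkWeight]

@[simp] lemma walkWeight_append (w : Sym2 V → ℝ) {u v x : V} (p : G.Walk u v)
    (q : G.Walk v x) : walkWeight w (p.append q) = walkWeight w p + walkWeight w q := by
  simp [walkWeight]

@[simp] lemma walkWeight_reverse (w : Sym2 V → ℝ) {u v : V} (p : G.Walk u v) :
    walkWeight w p.reverse = walkWeight w p := by
  simp [walkWeight]

lemma walkWeight_const (c : ℝ) {u v : V} (p : G.Walk u v) :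
    walkWeight (fun _ => c) p = p.length * c := by
  simp [walkWeight]

noncomputable def walkWeightLinear {u v : V} (p : G.Walk u v) : (Sym2 V → ℝ) →ₗ[ℝ] ℝ where
  toFun w := walkWeight w p
  map_add' _ _ := List.sum_map_add
  map_smul' c _ := List.sum_map_mul_left _ _ c

@[simp] lemma walkWeightLinear_apply {u v : V} (p : G.Walk u v) (w : Sym2 V → ℝ) :
    walkWeightLinear p w = walkWeight w p :=
  rfl

noncomputable def graphWeightLinear [Finite V] (G : SimpleGraph V) : (Sym2 V → ℝ) →ₗ[ℝ] ℝ where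
  toFun := graphWeight G
  map_add' _ _ := finsum_mem_add_distrib' (Set.toFinite _) (Set.toFinite _)
  map_smul' c w := (mul_finsum_mem w c).symm

lemma graphWeight_eq_sum [Fintype G.edgeSet] (w : Sym2 V → ℝ) :
    graphWeight G w = ∑ e ∈ G.edgeFinset, w e := by
  rw [graphWeight, ← coe_edgeFinset, finsum_mem_coe_finset]

lemma isGenFilling_iff (hG : G.IsTree) {w : Sym2 V → ℝ} {M : Set V} {ρ : V → V → ℝ} :
    IsGenFilling G w M ρ ↔ ∀ p ∈ M, ∀ q ∈ M, ρ p q ≤ walkWeight w (hG.path p q) := by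
  refine ⟨fun h p hp q hq => h.2 p hp q hq _ (hG.isPath_path p q), fun h => ⟨hG.connected, ?_⟩⟩
  intro p hp q hq γ hγ
  rw [hG.eq_path hγ]
  exact h p hp q hq

lemma isPolyhedral_setOf_isGenFilling [Finite V] (hG : G.IsTree) (M : Set V) (ρ : V → V → ℝ) :
    IsPolyhedral {w | IsGenFilling G w M ρ} := by
  convert isPolyhedral_of_finite (fun pq : M × M => walkWeightLinear (hG.path pq.1 pq.2))
    fun pq => ρ pq.1 pq.2 using 1
  ext w
  simp [isGenFilling_iff hG]

/-- Constant weights dominating `ρ` make a filling: a path between distinct points has an edge. -/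
lemma exists_isGenFilling [Finite V] (hG : G.Connected) {M : Set V} {ρ : V → V → ℝ}
    (hρ : ∀ p ∈ M, ρ p p = 0) : ∃ w, IsGenFilling G w M ρ := by
  obtain ⟨C, hC⟩ := (Set.finite_range fun pq : V × V => ρ pq.1 pq.2).bddAbove
  refine ⟨fun _ => max C 0, hG, fun p hp q hq γ hγ => ?_⟩
  rw [walkWeight_const]
  rcases eq_or_ne p q with rfl | hne
  · rw [length_eq_zero_iff.2 (isPath_iff_nil.1 hγ), hρ p hp]
    simp
  · have hlen : (1 : ℝ) ≤ γ.length := by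
      exact_mod_cast Nat.one_le_iff_ne_zero.2 fun h => hne (eq_of_length_eq_zero h)
    nlinarith [hC ⟨(p, q), rfl⟩, le_max_left C 0, le_max_right C 0]

variable [Fintype V]

/-- At a vertex with children, the paths through two different children join to a path between
boundary points, so at most one of them has negative weight and the lightest weighs at most
their sum. -/
theorem exists_mem_descendants_walkWeight_le_subtreeWeight (hG : G.IsTree) {M : Set V} {r : V}
    (hr : r ∈ M) (hM : ∀ v, deg G v = 1 → v ∈ M) {w : Sym2 V → ℝ}
    (hw : ∀ p ∈ M, ∀ q ∈ M, 0 ≤ walkWeight w (hG.path p q)) (v : V) :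
    ∃ ℓ ∈ M, ℓ ∈ hG.descendants r v ∧ walkWeight w (hG.path v ℓ) ≤ hG.subtreeWeight r w v := by
  induction hn : (hG.descendants r v).card using Nat.strong_induction_on generalizing v with
  | _ n ih =>
  subst hn
  rcases (hG.children r v).eq_empty_or_nonempty with hleaf | hch
  · have hv : v ∈ M := by
      rcases eq_or_ne v r with rfl | hvr
      · exact hr
      · exact hM v (by rw [deg, hG.neighborSet_eq_singleton_of_children_eq_empty hvr hleaf,
          Set.ncard_singleton])
    refine ⟨v, hv, IsTree.self_mem_descendants v, ?_⟩
    rw [hG.path_self, IsTree.subtreeWeight_eq, hleaf, Finset.sum_empty, walkWeight_nil]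
  · have hsub : ∀ c ∈ hG.children r v, ∃ ℓ ∈ M, ℓ ∈ hG.descendants r c ∧
        walkWeight w (hG.path c ℓ) ≤ hG.subtreeWeight r w c := fun c hc =>
      ih _ (IsTree.card_descendants_child_lt hc) c rfl
    choose! ℓ hℓM hℓ hℓw using hsub
    have hpath : ∀ c ∈ hG.children r v,
        walkWeight w (hG.path v (ℓ c)) = w s(v, c) + walkWeight w (hG.path c (ℓ c)) :=
      fun c hc => by rw [IsTree.path_eq_cons_of_mem_descendants_child hc (hℓ c hc), walkWeight_cons]
    obtain ⟨c, hc, hmin⟩ := Finset.exists_le_sum_of_pairwise_add_nonneg hch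
      (fun c => walkWeight w (hG.path v (ℓ c))) fun c hc c' hc' hne => by
        have := hw _ (hℓM c hc) _ (hℓM c' hc')
        rwa [IsTree.path_eq_reverse_append hc hc' hne (hℓ c hc) (hℓ c' hc'),
          walkWeight_append, walkWeight_reverse] at this
    refine ⟨ℓ c, hℓM c hc, IsTree.descendants_subset_of_mem
      (IsTree.child_mem_descendants hc) (hℓ c hc), hmin.trans ?_⟩
    rw [IsTree.subtreeWeight_eq]
    exact Finset.sum_le_sum fun c hc => by rw [hpath c hc]; linarith [hℓw c hc]

theorem graphWeight_nonneg (hG : G.IsTree) {M : Set V} (hM : ∀ v, deg G v = 1 → v ∈ M)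
    {w : Sym2 V → ℝ} (hw : ∀ p ∈ M, ∀ q ∈ M, 0 ≤ walkWeight w (hG.path p q)) :
    0 ≤ graphWeight G w := by
  classical
  cases subsingleton_or_nontrivial V
  · have hE : G.edgeSet = ∅ := Set.eq_empty_of_forall_notMem fun e he => by
      induction e using Sym2.ind with
      | _ a b => exact (mem_edgeSet G).1 he |>.ne (Subsingleton.elim a b)
    rw [graphWeight, hE, finsum_mem_empty]
  · obtain ⟨r, hr⟩ := hG.exists_vert_degree_one_of_nontrivial
    have hrM : r ∈ M := hM r (by rw [deg, Set.ncard_eq_toFinset_card']; exact hr)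
    obtain ⟨ℓ, hℓM, -, hℓ⟩ :=
      exists_mem_descendants_walkWeight_le_subtreeWeight hG hrM hM hw r
    rw [graphWeight_eq_sum, ← hG.subtreeWeight_root r]
    exact (hw r hrM ℓ hℓM).trans hℓ

/-- For a finite pseudometric space `(M, ρ)` and a finite tree
`G` joining `M` in which every vertex of degree 1 is boundary, there exists a
generalized minimal parametric filling of type `G`. -/
theorem exists_gen_min_parametric_filling {V : Type*} [Fintype V] (G : SimpleGraph V)
    (M : Set V) (ρ : V → V → ℝ) (hρ : IsPseudometricOn M ρ) (hG : G.IsTree)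
    (hM : ∀ v : V, deg G v = 1 → v ∈ M) :
    ∃ wstar : Sym2 V → ℝ, IsGenFilling G wstar M ρ ∧
      ∀ w : Sym2 V → ℝ, IsGenFilling G w M ρ →
        graphWeight G wstar ≤ graphWeight G w := by
  have hbdd : BddBelow (graphWeightLinear G '' {w | IsGenFilling G w M ρ}) := by
    refine ⟨0, ?_⟩
    rintro _ ⟨w, hw, rfl⟩
    exact graphWeight_nonneg hG hM fun p hp q hq =>
      (hρ.2.1 p hp q hq).trans ((isGenFilling_iff hG).1 hw p hp q hq)
  obtain ⟨wstar, hwstar, hmin⟩ := (isPolyhedral_setOf_isGenFilling hG M ρ).exists_isMinOn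
    (exists_isGenFilling hG.connected hρ.2.2.1) (graphWeightLinear G) hbdd
  exact ⟨wstar, hwstar, fun w hw => hmin hw⟩

end MinFill
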